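/- Let F : ℝ → ℂ be integrable and compactly supported, let k ∈ ℂ with Im(k) > 0, and let G(k,·) be a solution of the real-line scattering ODE with potential F at spectral parameter k. Then the upper-left entry satisfies (G(k,x))₁₁ ≠ 0 for every x ∈ ℝ. (Indeed, the quantity |(G(k,x))₁₁|²·exp(4·Im(k)·x) − |(G(k,x))₂₁|² is nondecreasing in x and strictly positive.) -/

import Mathlib

/-!
Write `a = G₁₁` and `b = G₂₁`. The integral equation says `a' = F e^{2ikt} b` and
`b' = conj F e^{-2ikt} a`, in integrated form. Since `e^{2ikt} e^{4 Im k t} = conj e^{-2ikt}`, the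
cross terms cancel in the derivative of `|a|² e^{4 Im k t} - |b|²`, which is therefore
`4 Im k e^{4 Im k t} |a|² ≥ 0`. Left of the support of `F` we have `a = 1` and `b = 0`, so this
quantity is positive there, hence everywhere; it would be `-|b|² ≤ 0` at a zero of `a`.

As `F` is only integrable, `a` and `b` are merely absolutely continuous: derivatives are replaced by
integral representations, and the product rule for these is Fubini's theorem on a triangle.
-/

open MeasureTheory Set

/-- The matrix potential `W(k,t)` for the real-line scattering ODE. -/
noncomputable def WmatLine (F : ℝ → ℂ) (k : ℂ) (t : ℝ) : Matrix (Fin 2) (Fin 2) ℂ :=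
  !![0, F t * Complex.exp (2 * Complex.I * k * t);
     (starRingEnd ℂ) (F t) * Complex.exp (-(2 * Complex.I * k * t)), 0]

/-- `G` is a solution of the real-line scattering ODE with potential `F`
at spectral parameter `k`. -/
def IsSolutionLine (F : ℝ → ℂ) (k : ℂ) (G : ℝ → Matrix (Fin 2) (Fin 2) ℂ) : Prop :=
  Continuous G ∧
  ∀ x : ℝ, ∀ i j : Fin 2,
    G x i j = (1 : Matrix (Fin 2) (Fin 2) ℂ) i j +
      ∫ t in Set.Iic x, (WmatLine F k t * G t) i j

open Filter ComplexConjugate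

def IsPrimitiveOn {E : Type*} [NormedAddCommGroup E] [NormedSpace ℝ E]
    (u f : ℝ → E) (x y : ℝ) : Prop :=
  IntegrableOn f (Ioc x y) ∧ ∀ t ∈ Icc x y, u t = u x + ∫ s in Ioc x t, f s

namespace IsPrimitiveOn

section NormedSpace

variable {E : Type*} [NormedAddCommGroup E] [NormedSpace ℝ E] {u v f g : ℝ → E} {x y t : ℝ}

theorem mono_right (h : IsPrimitiveOn u f x y) (ht : t ∈ Icc x y) : IsPrimitiveOn u f x t :=
  ⟨h.1.mono_set (Ioc_subset_Ioc_right ht.2), fun s hs => h.2 s ⟨hs.1, hs.2.trans ht.2⟩⟩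

theorem continuousOn (h : IsPrimitiveOn u f x y) : ContinuousOn u (Icc x y) := by
  rcases le_or_gt x y with hxy | hxy
  · have hprim := intervalIntegral.continuousOn_primitive_interval'
      ((intervalIntegrable_iff_integrableOn_Ioc_of_le hxy).mpr h.1) left_mem_uIcc
    rw [uIcc_of_le hxy] at hprim
    refine ((continuousOn_const (c := u x)).add hprim).congr fun t ht => ?_
    rw [h.2 t ht, Pi.add_apply, intervalIntegral.integral_of_le ht.1]
  · simp [Icc_eq_empty_of_lt hxy]

theorem congr (h : IsPrimitiveOn u f x y) (hfg : EqOn f g (Ioc x y)) : IsPrimitiveOn u g x y :=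
  ⟨h.1.congr_fun hfg measurableSet_Ioc, fun t ht => by
    rw [h.2 t ht, setIntegral_congr_fun measurableSet_Ioc (hfg.mono (Ioc_subset_Ioc_right ht.2))]⟩

theorem sub (hu : IsPrimitiveOn u f x y) (hv : IsPrimitiveOn v g x y) :
    IsPrimitiveOn (fun t => u t - v t) (fun t => f t - g t) x y :=
  ⟨hu.1.sub hv.1, fun t ht => by
    simp only
    rw [hu.2 t ht, hv.2 t ht, integral_sub (hu.mono_right ht).1 (hv.mono_right ht).1]
    abel⟩

theorem map {E' : Type*} [NormedAddCommGroup E'] [NormedSpace ℝ E'] [CompleteSpace E]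
    [CompleteSpace E'] (h : IsPrimitiveOn u f x y) (L : E →L[ℝ] E') :
    IsPrimitiveOn (fun t => L (u t)) (fun t => L (f t)) x y :=
  ⟨L.integrable_comp h.1, fun t ht => by
    simp only
    rw [h.2 t ht, map_add, L.integral_comp_comm (h.mono_right ht).1]⟩

theorem of_hasDerivAt [CompleteSpace E] (hu : ∀ t ∈ Icc x y, HasDerivAt u (f t) t)
    (hf : IntegrableOn f (Ioc x y)) : IsPrimitiveOn u f x y := by
  refine ⟨hf, fun t ht => ?_⟩
  have hderiv : ∀ s ∈ uIcc x t, HasDerivAt u (f s) s := fun s hs => by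
    rw [uIcc_of_le ht.1] at hs
    exact hu s ⟨hs.1, hs.2.trans ht.2⟩
  rw [← intervalIntegral.integral_of_le ht.1,
    intervalIntegral.integral_eq_sub_of_hasDerivAt hderiv
      ((intervalIntegrable_iff_integrableOn_Ioc_of_le ht.1).mpr
        (hf.mono_set (Ioc_subset_Ioc_right ht.2)))]
  abel

theorem of_eq_add_integral_Iic {c : E} (hf : IntegrableOn f (Iic y))
    (hu : ∀ t ≤ y, u t = c + ∫ s in Iic t, f s) : IsPrimitiveOn u f x y := by
  refine ⟨hf.mono_set Ioc_subset_Iic_self, fun t ht => ?_⟩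
  rw [hu t ht.2, hu x (ht.1.trans ht.2), ← Iic_union_Ioc_eq_Iic ht.1,
    setIntegral_union (Iic_disjoint_Ioc le_rfl) measurableSet_Ioc
      (hf.mono_set (Iic_subset_Iic.mpr (ht.1.trans ht.2)))
      (hf.mono_set (Ioc_subset_Iic_self.trans (Iic_subset_Iic.mpr ht.2)))]
  abel

end NormedSpace

theorem le_of_nonneg {u f : ℝ → ℝ} {x y : ℝ} (h : IsPrimitiveOn u f x y) (hxy : x ≤ y)
    (hf : ∀ t ∈ Ioc x y, 0 ≤ f t) : u x ≤ u y := by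
  rw [h.2 y ⟨hxy, le_rfl⟩]
  exact le_add_of_nonneg_right (setIntegral_nonneg measurableSet_Ioc hf)

end IsPrimitiveOn

section RCLike

variable {𝕜 : Type*} [RCLike 𝕜]

theorem integral_Ioc_mul_integral_Ioc {x y : ℝ} {f g : ℝ → 𝕜}
    (hf : IntegrableOn f (Ioc x y)) (hg : IntegrableOn g (Ioc x y)) :
    (∫ t in Ioc x y, f t) * (∫ t in Ioc x y, g t) =
      (∫ t in Ioc x y, f t * ∫ s in Ioc x t, g s) +
        ∫ t in Ioc x y, g t * ∫ s in Ioc x t, f s := by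
  set μ := volume.restrict (Ioc x y)
  set D := {p : ℝ × ℝ | p.2 ≤ p.1}
  have hD : MeasurableSet D := measurableSet_le measurable_snd measurable_fst
  have hfg : Integrable (fun p : ℝ × ℝ => f p.1 * g p.2) (μ.prod μ) := hf.mul_prod hg
  have hbelow : ∫ p in D, f p.1 * g p.2 ∂(μ.prod μ) =
      ∫ t in Ioc x y, f t * ∫ s in Ioc x t, g s := by
    rw [← integral_indicator hD, integral_prod _ (hfg.indicator hD)]
    refine setIntegral_congr_fun measurableSet_Ioc fun t ht => ?_
    have hsection : ∀ s, D.indicator (fun p => f p.1 * g p.2) (t, s) =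
        (Iic t).indicator (fun s => f t * g s) s := fun s => by
      by_cases hs : s ≤ t <;> simp [D, indicator, hs]
    simp only [hsection]
    rw [integral_indicator measurableSet_Iic, Measure.restrict_restrict measurableSet_Iic,
      Iic_inter_Ioc_of_le ht.2, integral_const_mul]
  have habove : ∫ p in Dᶜ, f p.1 * g p.2 ∂(μ.prod μ) =
      ∫ s in Ioc x y, g s * ∫ t in Ioc x s, f t := by
    rw [← integral_indicator hD.compl, integral_prod_symm _ (hfg.indicator hD.compl)]
    refine setIntegral_congr_fun measurableSet_Ioc fun s hs => ?_
    have hsection : ∀ t, Dᶜ.indicator (fun p => f p.1 * g p.2) (t, s) =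
        (Iio s).indicator (fun t => g s * f t) t := fun t => by
      by_cases ht : t < s <;> simp [D, indicator, ht, mul_comm]
    have hinter : Iio s ∩ Ioc x y = Ioo x s := by
      ext r
      simp only [mem_inter_iff, mem_Iio, mem_Ioc, mem_Ioo]
      grind
    simp only [hsection]
    rw [integral_indicator measurableSet_Iio, Measure.restrict_restrict measurableSet_Iio, hinter,
      integral_const_mul, integral_Ioc_eq_integral_Ioo]
  rw [← integral_prod_mul, ← integral_add_compl hD hfg, hbelow, habove]

namespace IsPrimitiveOn

variable {u v f g : ℝ → 𝕜} {x y : ℝ}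

theorem integrableOn_mul (hv : IsPrimitiveOn v g x y) (hf : IntegrableOn f (Ioc x y)) :
    IntegrableOn (fun t => f t * v t) (Ioc x y) :=
  hf.mul_continuousOn_of_subset hv.continuousOn measurableSet_Ioc isCompact_Icc
    Ioc_subset_Icc_self

theorem integral_mul_eq (hv : IsPrimitiveOn v g x y) (hf : IntegrableOn f (Ioc x y)) :
    ∫ t in Ioc x y, f t * v t =
      (∫ t in Ioc x y, f t) * v x + ∫ t in Ioc x y, f t * ∫ s in Ioc x t, g s := by
  have hsplit : ∀ t ∈ Ioc x y, f t * v t = f t * v x + f t * ∫ s in Ioc x t, g s :=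
    fun t ht => by rw [hv.2 t (Ioc_subset_Icc_self ht), mul_add]
  have hrest : IntegrableOn (fun t => f t * ∫ s in Ioc x t, g s) (Ioc x y) :=
    ((hv.integrableOn_mul hf).sub (hf.mul_const (v x))).congr_fun
      (fun t ht => by simp only [Pi.sub_apply]; rw [hsplit t ht]; ring) measurableSet_Ioc
  rw [setIntegral_congr_fun measurableSet_Ioc hsplit, integral_add (hf.mul_const _) hrest,
    integral_mul_const]

theorem mul (hu : IsPrimitiveOn u f x y) (hv : IsPrimitiveOn v g x y) :
    IsPrimitiveOn (fun t => u t * v t) (fun t => f t * v t + u t * g t) x y := by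
  refine ⟨(hv.integrableOn_mul hu.1).add ?_, fun t ht => ?_⟩
  · simpa only [mul_comm] using hu.integrableOn_mul hv.1
  have hu' := hu.mono_right ht
  have hv' := hv.mono_right ht
  have hgu : ∫ s in Ioc x t, u s * g s = ∫ s in Ioc x t, g s * u s := by simp_rw [mul_comm]
  simp only
  rw [integral_add (hv'.integrableOn_mul hu'.1) ((hu'.integrableOn_mul hv'.1).congr_fun
      (fun s _ => mul_comm _ _) measurableSet_Ioc), hgu,
    hv'.integral_mul_eq hu'.1, hu'.integral_mul_eq hv'.1, hu'.2 t ⟨ht.1, le_rfl⟩,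
    hv'.2 t ⟨ht.1, le_rfl⟩]
  linear_combination integral_Ioc_mul_integral_Ioc hu'.1 hv'.1

theorem norm_sq (h : IsPrimitiveOn u f x y) :
    IsPrimitiveOn (fun t => ‖u t‖ ^ 2) (fun t => 2 * RCLike.re (f t * conj (u t))) x y := by
  have hconj : IsPrimitiveOn (fun t => conj (u t)) (fun t => conj (f t)) x y := by
    simpa using h.map (RCLike.conjCLE : 𝕜 ≃L[ℝ] 𝕜).toContinuousLinearMap
  have hre := (h.mul hconj).map RCLike.reCLM
  simp only [RCLike.reCLM_apply, RCLike.mul_conj, ← RCLike.ofReal_pow, RCLike.ofReal_re] at hre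
  refine hre.congr fun t _ => ?_
  have hswap : u t * conj (f t) = conj (f t * conj (u t)) := by simp [mul_comm]
  simp only
  rw [hswap, map_add, RCLike.conj_re, two_mul]

end IsPrimitiveOn

theorem MeasureTheory.Integrable.mul_continuous_of_hasCompactSupport {X : Type*}
    [TopologicalSpace X] [T2Space X] [MeasurableSpace X] [OpensMeasurableSpace X]
    {μ : Measure X} {f g : X → 𝕜} (hf : Integrable f μ) (hfc : HasCompactSupport f)
    (hg : Continuous g) : Integrable (fun t => f t * g t) μ :=
  (hf.integrableOn.mul_continuousOn hg.continuousOn hfc).integrable_of_forall_notMem_eq_zero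
    fun t ht => by simp [image_eq_zero_of_notMem_tsupport ht]

end RCLike

theorem HasCompactSupport.eventually_atBot_eq_zero {α M : Type*} [TopologicalSpace α]
    [LinearOrder α] [NoMinOrder α] [ClosedIicTopology α] [Zero M] {f : α → M}
    (hf : HasCompactSupport f) : ∀ᶠ t in atBot, f t = 0 :=
  hasCompactSupport_iff_eventuallyEq.mp hf |>.filter_mono
    (atBot_le_cocompact.trans cocompact_le_coclosedCompact)

theorem conj_exp_neg_two_I_mul (k : ℂ) (t : ℝ) :
    conj (Complex.exp (-(2 * Complex.I * k * t))) =
      Complex.exp (2 * Complex.I * k * t) * Real.exp (4 * k.im * t) := by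
  rw [← Complex.exp_conj, Complex.ofReal_exp, ← Complex.exp_add]
  congr 1
  apply Complex.ext
  · simp; ring
  · simp

namespace IsSolutionLine

variable {F : ℝ → ℂ} {k : ℂ} {G : ℝ → Matrix (Fin 2) (Fin 2) ℂ}

theorem apply_zero_zero (hG : IsSolutionLine F k G) (x : ℝ) :
    G x 0 0 = 1 + ∫ t in Iic x, F t * Complex.exp (2 * Complex.I * k * t) * G t 1 0 := by
  simpa [WmatLine, Matrix.mul_apply, Fin.sum_univ_two] using hG.2 x 0 0

theorem apply_one_zero (hG : IsSolutionLine F k G) (x : ℝ) :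
    G x 1 0 = ∫ t in Iic x, conj (F t) * Complex.exp (-(2 * Complex.I * k * t)) * G t 0 0 := by
  simpa [WmatLine, Matrix.mul_apply, Fin.sum_univ_two] using hG.2 x 1 0

theorem apply_of_forall_le_eq_zero (hG : IsSolutionLine F k G) {x₀ : ℝ}
    (hF₀ : ∀ t ≤ x₀, F t = 0) : G x₀ 0 0 = 1 ∧ G x₀ 1 0 = 0 := by
  constructor
  · rw [hG.apply_zero_zero, setIntegral_eq_zero_of_forall_eq_zero fun t ht => by
      simp [hF₀ t ht], add_zero]
  · rw [hG.apply_one_zero, setIntegral_eq_zero_of_forall_eq_zero fun t ht => by simp [hF₀ t ht]]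

theorem isPrimitiveOn_zero_zero (hG : IsSolutionLine F k G) (hF : Integrable F)
    (hFc : HasCompactSupport F) (x y : ℝ) :
    IsPrimitiveOn (fun t => G t 0 0)
      (fun t => F t * Complex.exp (2 * Complex.I * k * t) * G t 1 0) x y := by
  have hint : Integrable fun t => F t * Complex.exp (2 * Complex.I * k * t) * G t 1 0 := by
    simpa only [mul_assoc, Pi.mul_apply] using hF.mul_continuous_of_hasCompactSupport hFc
      ((by fun_prop : Continuous fun t : ℝ => Complex.exp (2 * Complex.I * k * t)).mul
        (hG.1.matrix_elem 1 0))
  exact .of_eq_add_integral_Iic hint.integrableOn fun t _ => hG.apply_zero_zero t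

theorem isPrimitiveOn_one_zero (hG : IsSolutionLine F k G) (hF : Integrable F)
    (hFc : HasCompactSupport F) (x y : ℝ) :
    IsPrimitiveOn (fun t => G t 1 0)
      (fun t => conj (F t) * Complex.exp (-(2 * Complex.I * k * t)) * G t 0 0) x y := by
  have hint :
      Integrable fun t => conj (F t) * Complex.exp (-(2 * Complex.I * k * t)) * G t 0 0 := by
    simpa only [mul_assoc, Pi.mul_apply, ContinuousLinearEquiv.coe_coe,
      Complex.conjCLE_apply] using
      (Complex.conjCLE.toContinuousLinearMap.integrable_comp hF).mul_continuous_of_hasCompactSupport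
        (hFc.comp_left (map_zero _))
        ((by fun_prop : Continuous fun t : ℝ => Complex.exp (-(2 * Complex.I * k * t))).mul
          (hG.1.matrix_elem 0 0))
  exact .of_eq_add_integral_Iic hint.integrableOn fun t _ => by
    rw [hG.apply_one_zero t, zero_add]

theorem isPrimitiveOn_energy (hG : IsSolutionLine F k G) (hF : Integrable F)
    (hFc : HasCompactSupport F) (x y : ℝ) :
    IsPrimitiveOn (fun t => ‖G t 0 0‖ ^ 2 * Real.exp (4 * k.im * t) - ‖G t 1 0‖ ^ 2)
      (fun t => 4 * k.im * Real.exp (4 * k.im * t) * ‖G t 0 0‖ ^ 2) x y := by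
  have hweight : IsPrimitiveOn (fun t => Real.exp (4 * k.im * t))
      (fun t => Real.exp (4 * k.im * t) * (4 * k.im)) x y :=
    .of_hasDerivAt (fun t _ => by simpa using ((hasDerivAt_id t).const_mul (4 * k.im)).exp)
      (Continuous.integrableOn_Ioc (by fun_prop))
  refine ((hG.isPrimitiveOn_zero_zero hF hFc x y).norm_sq.mul hweight |>.sub
    (hG.isPrimitiveOn_one_zero hF hFc x y).norm_sq).congr fun t _ => ?_
  have hcross : RCLike.re (conj (F t) * Complex.exp (-(2 * Complex.I * k * t)) * G t 0 0 *
      conj (G t 1 0)) = RCLike.re (F t * Complex.exp (2 * Complex.I * k * t) * G t 1 0 *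
      conj (G t 0 0)) * Real.exp (4 * k.im * t) := by
    rw [← RCLike.conj_re]
    simp only [map_mul, RCLike.conj_conj, conj_exp_neg_two_I_mul, RCLike.re_to_complex]
    rw [← Complex.re_mul_ofReal]
    ring_nf
  simp only
  rw [hcross]
  ring

end IsSolutionLine

theorem a_nonvanishing_upper_half_plane (F : ℝ → ℂ)
    (hF : Integrable F) (hFc : HasCompactSupport F)
    (k : ℂ) (hk : 0 < k.im)
    (G : ℝ → Matrix (Fin 2) (Fin 2) ℂ) (hG : IsSolutionLine F k G) :
    ∀ x : ℝ, G x 0 0 ≠ 0 := by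
  intro x hx
  obtain ⟨x₀, hx₀⟩ :=
    (hFc.eventually_atBot_eq_zero.and (eventually_le_atBot x)).exists_forall_of_atBot
  obtain ⟨h00, h10⟩ := hG.apply_of_forall_le_eq_zero fun t ht => (hx₀ t ht).1
  have henergy := (hG.isPrimitiveOn_energy hF hFc x₀ x).le_of_nonneg (hx₀ x₀ le_rfl).2
    fun t _ => by have := hk.le; positivity
  simp only [h00, h10, hx, norm_one, norm_zero] at henergy
  nlinarith [Real.exp_pos (4 * k.im * x₀), sq_nonneg ‖G x 1 0‖]
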